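/- Any piecewise bilinear map φ : D → ℝ² on a rectangular grid whose Jacobian is positive definite at every point where it is defined is locally injective on each grid cell. -/

import Mathlib

open Matrix

/-- The Jacobian matrix at `p` of the bilinear map
`(x,y) ↦ A + B x + C y + D x y` (componentwise, with coefficients in `ℝ²`). -/
def bilinearJac (B C D : ℝ × ℝ) (p : ℝ × ℝ) : Matrix (Fin 2) (Fin 2) ℝ :=
  !![B.1 + D.1 * p.2, C.1 + D.1 * p.1; B.2 + D.2 * p.2, C.2 + D.2 * p.1]

/-!
A bilinear map `f` satisfies `f q - f p = J(m) (q - p)` exactly, where `m` is the midpoint of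
`p` and `q`; so `f p = f q` forces `vᵀ J(m) v = 0` for `v = q - p`. If `p` and `q` differ in
both coordinates, `m` lies in the open cell and the positive definite symmetric part of `J(m)`
gives `v = 0`. Otherwise `v` is parallel to an axis, `m` may lie on the boundary, and only a
diagonal entry of `J(m)` matters. These entries stay positive on the closed cell: by continuity
the symmetric part is positive semidefinite there, so a vanishing diagonal entry forces the
off-diagonal entry to vanish along a whole edge; then the mixed coefficient `D` vanishes and the
diagonal entry is a constant, which is positive inside the cell.
-/

open Set

theorem Matrix.PosDef.dotProduct_mulVec_pos_of_add_transpose {n : Type*} [Fintype n]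
    {M : Matrix n n ℝ} (hM : (M + Mᵀ).PosDef) {v : n → ℝ} (hv : v ≠ 0) :
    0 < v ⬝ᵥ (M *ᵥ v) := by
  have h := hM.dotProduct_mulVec_pos hv
  rw [star_trivial, add_mulVec, dotProduct_add, dotProduct_mulVec v Mᵀ, vecMul_transpose,
    dotProduct_comm (M *ᵥ v)] at h
  linarith

theorem add_div_two_mem_Ioo {𝕜 : Type*} [Field 𝕜] [LinearOrder 𝕜] [IsStrictOrderedRing 𝕜]
    {a b x y : 𝕜} (hx : x ∈ Icc a b) (hy : y ∈ Icc a b) (hxy : x ≠ y) :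
    (x + y) / 2 ∈ Ioo a b := by
  rcases hxy.lt_or_gt with h | h <;> constructor <;> linarith [hx.1, hx.2, hy.1, hy.2]

theorem add_mul_pos_of_sq_add_mul_le {c d e w w' x x₀ y y' : ℝ} (hy : y ≠ y')
    (hx₀ : 0 < c + d * x₀) (hx : 0 ≤ c + d * x)
    (hw : (e + d * y) ^ 2 ≤ w * (c + d * x)) (hw' : (e + d * y') ^ 2 ≤ w' * (c + d * x)) :
    0 < c + d * x := by
  refine hx.lt_of_ne fun h0 => ?_
  rw [← h0, mul_zero] at hw hw'
  have hy₀ : e + d * y = 0 := pow_eq_zero_iff two_ne_zero |>.mp (le_antisymm hw (sq_nonneg _))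
  have hy₀' : e + d * y' = 0 := pow_eq_zero_iff two_ne_zero |>.mp (le_antisymm hw' (sq_nonneg _))
  have hd : d * (y - y') = 0 := by linear_combination hy₀ - hy₀'
  have hd0 : d = 0 := (mul_eq_zero.mp hd).resolve_right (sub_ne_zero.mpr hy)
  simp only [hd0, zero_mul, add_zero] at h0 hx₀
  exact hx₀.ne h0

def bilinearMap (A B C D : ℝ × ℝ) (p : ℝ × ℝ) : ℝ × ℝ :=
  (A.1 + B.1 * p.1 + C.1 * p.2 + D.1 * p.1 * p.2, A.2 + B.2 * p.1 + C.2 * p.2 + D.2 * p.1 * p.2)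

theorem bilinearMap_sub_eq_bilinearJac_mulVec (A B C D p q : ℝ × ℝ) :
    ![(bilinearMap A B C D q - bilinearMap A B C D p).1,
        (bilinearMap A B C D q - bilinearMap A B C D p).2] =
      bilinearJac B C D ((p.1 + q.1) / 2, (p.2 + q.2) / 2) *ᵥ ![q.1 - p.1, q.2 - p.2] := by
  ext k
  fin_cases k <;>
    simp only [bilinearMap, bilinearJac, Prod.mk_sub_mk, Fin.zero_eta, Fin.mk_one, mulVec,
      dotProduct, Fin.sum_univ_two, of_apply, cons_val', cons_val_zero, cons_val_one,
      cons_val_fin_one] <;>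
    ring

section Cell

variable {α α' β β' : ℝ} {B C D : ℝ × ℝ}

theorem bilinearJac_ineqs_of_posDef {p : ℝ × ℝ}
    (h : (bilinearJac B C D p + (bilinearJac B C D p)ᵀ).PosDef) :
    0 < B.1 + D.1 * p.2 ∧ 0 < C.2 + D.2 * p.1 ∧
      (C.1 + D.1 * p.1 + B.2 + D.2 * p.2) ^ 2 < 4 * (B.1 + D.1 * p.2) * (C.2 + D.2 * p.1) := by
  have h00 := h.diag_pos (i := 0)
  have h11 := h.diag_pos (i := 1)
  have hdet := h.det_pos
  simp only [bilinearJac, Matrix.add_apply, transpose_apply, of_apply, cons_val', cons_val_zero,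
    cons_val_one, cons_val_fin_one, pos_add_self_iff, det_fin_two, sub_pos] at h00 h11 hdet
  exact ⟨by linarith, by linarith, by nlinarith⟩

theorem bilinearJac_ineqs_of_mem_Icc (hα : α < α') (hβ : β < β')
    (hpos : ∀ p ∈ Ioo α α' ×ˢ Ioo β β',
      (bilinearJac B C D p + (bilinearJac B C D p)ᵀ).PosDef)
    {p : ℝ × ℝ} (hp : p ∈ Icc α α' ×ˢ Icc β β') :
    0 ≤ B.1 + D.1 * p.2 ∧ 0 ≤ C.2 + D.2 * p.1 ∧
      (C.1 + D.1 * p.1 + B.2 + D.2 * p.2) ^ 2 ≤ 4 * (B.1 + D.1 * p.2) * (C.2 + D.2 * p.1) := by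
  rw [← closure_Ioo hα.ne, ← closure_Ioo hβ.ne, ← closure_prod_eq] at hp
  have le_of_lt {f g : ℝ × ℝ → ℝ} (hf : Continuous f) (hg : Continuous g)
      (h : ∀ x ∈ Ioo α α' ×ˢ Ioo β β', f x < g x) : f p ≤ g p :=
    ContinuousWithinAt.closure_le hp hf.continuousWithinAt hg.continuousWithinAt
      fun x hx => (h x hx).le
  have hopen x hx := bilinearJac_ineqs_of_posDef (hpos x hx)
  exact ⟨le_of_lt (by fun_prop) (by fun_prop) fun x hx => (hopen x hx).1,
    le_of_lt (by fun_prop) (by fun_prop) fun x hx => (hopen x hx).2.1,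
    le_of_lt (by fun_prop) (by fun_prop) fun x hx => (hopen x hx).2.2⟩

theorem bilinearJac_diag_pos (hα : α < α') (hβ : β < β')
    (hpos : ∀ p ∈ Ioo α α' ×ˢ Ioo β β',
      (bilinearJac B C D p + (bilinearJac B C D p)ᵀ).PosDef)
    {p : ℝ × ℝ} (hp : p ∈ Icc α α' ×ˢ Icc β β') :
    0 < bilinearJac B C D p 0 0 ∧ 0 < bilinearJac B C D p 1 1 := by
  have hclosed x hx := bilinearJac_ineqs_of_mem_Icc hα hβ hpos (p := x) hx
  obtain ⟨hc₀, hc₁, -⟩ := bilinearJac_ineqs_of_posDef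
    (hpos ((α + α') / 2, (β + β') / 2) ⟨⟨by linarith, by linarith⟩, ⟨by linarith, by linarith⟩⟩)
  simp only [bilinearJac, of_apply, cons_val', cons_val_zero, cons_val_one, empty_val',
    cons_val_fin_one]
  -- `D.1` is both the slope of `J₀₀` in `p.2` and the slope of `J₀₁ + J₁₀` in `p.1`.
  constructor
  · refine add_mul_pos_of_sq_add_mul_le (e := C.1 + B.2 + D.2 * p.2) (w := 4 * (C.2 + D.2 * α))
      (w' := 4 * (C.2 + D.2 * α')) hα.ne hc₀ (hclosed p hp).1 ?_ ?_
    · linear_combination (hclosed (α, p.2) ⟨left_mem_Icc.2 hα.le, hp.2⟩).2.2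
    · linear_combination (hclosed (α', p.2) ⟨right_mem_Icc.2 hα.le, hp.2⟩).2.2
  · refine add_mul_pos_of_sq_add_mul_le (e := C.1 + B.2 + D.1 * p.1) (w := 4 * (B.1 + D.1 * β))
      (w' := 4 * (B.1 + D.1 * β')) hβ.ne hc₁ (hclosed p hp).2.1 ?_ ?_
    · linear_combination (hclosed (p.1, β) ⟨hp.1, left_mem_Icc.2 hβ.le⟩).2.2
    · linear_combination (hclosed (p.1, β') ⟨hp.1, right_mem_Icc.2 hβ.le⟩).2.2

theorem dotProduct_bilinearJac_midpoint_mulVec_pos (hα : α < α') (hβ : β < β')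
    (hpos : ∀ p ∈ Ioo α α' ×ˢ Ioo β β',
      (bilinearJac B C D p + (bilinearJac B C D p)ᵀ).PosDef)
    {p q : ℝ × ℝ} (hp : p ∈ Icc α α' ×ˢ Icc β β') (hq : q ∈ Icc α α' ×ˢ Icc β β') (hpq : p ≠ q) :
    0 < ![q.1 - p.1, q.2 - p.2] ⬝ᵥ
      (bilinearJac B C D ((p.1 + q.1) / 2, (p.2 + q.2) / 2) *ᵥ ![q.1 - p.1, q.2 - p.2]) := by
  have hm : ((p.1 + q.1) / 2, (p.2 + q.2) / 2) ∈ Icc α α' ×ˢ Icc β β' :=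
    ⟨⟨by linarith [hp.1.1, hq.1.1], by linarith [hp.1.2, hq.1.2]⟩,
      ⟨by linarith [hp.2.1, hq.2.1], by linarith [hp.2.2, hq.2.2]⟩⟩
  set m : ℝ × ℝ := ((p.1 + q.1) / 2, (p.2 + q.2) / 2)
  obtain ⟨h₀, h₁⟩ := bilinearJac_diag_pos hα hβ hpos hm
  have hquad (v : Fin 2 → ℝ) : v ⬝ᵥ (bilinearJac B C D m *ᵥ v) =
      v 0 ^ 2 * bilinearJac B C D m 0 0 +
        v 0 * v 1 * (bilinearJac B C D m 0 1 + bilinearJac B C D m 1 0) +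
        v 1 ^ 2 * bilinearJac B C D m 1 1 := by
    simp only [dotProduct, mulVec, Fin.sum_univ_two]
    ring
  by_cases h1 : p.1 = q.1
  · have h2 : q.2 - p.2 ≠ 0 := sub_ne_zero.mpr fun h2 => hpq (Prod.ext h1 h2.symm)
    rw [hquad]
    simp only [cons_val_zero, cons_val_one, h1, sub_self, ne_eq, OfNat.ofNat_ne_zero,
      not_false_eq_true, zero_pow, zero_mul, add_zero, zero_add]
    positivity
  by_cases h2 : p.2 = q.2
  · have h1 : q.1 - p.1 ≠ 0 := sub_ne_zero.mpr fun h1' => h1 h1'.symm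
    rw [hquad]
    simp only [cons_val_zero, cons_val_one, h2, sub_self, ne_eq, OfNat.ofNat_ne_zero,
      not_false_eq_true, zero_pow, zero_mul, mul_zero, add_zero]
    positivity
  have hm_open : m ∈ Ioo α α' ×ˢ Ioo β β' :=
    ⟨add_div_two_mem_Ioo hp.1 hq.1 h1, add_div_two_mem_Ioo hp.2 hq.2 h2⟩
  refine (hpos m hm_open).dotProduct_mulVec_pos_of_add_transpose fun hv => h1 ?_
  simpa [sub_eq_zero, eq_comm] using congrFun hv 0

theorem bilinearMap_injOn (A : ℝ × ℝ) (hα : α < α') (hβ : β < β')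
    (hpos : ∀ p ∈ Ioo α α' ×ˢ Ioo β β',
      (bilinearJac B C D p + (bilinearJac B C D p)ᵀ).PosDef) :
    InjOn (bilinearMap A B C D) (Icc α α' ×ˢ Icc β β') := by
  intro p hp q hq hpq
  by_contra hne
  have hquad := dotProduct_bilinearJac_midpoint_mulVec_pos hα hβ hpos hp hq hne
  rw [← bilinearMap_sub_eq_bilinearJac_mulVec A, hpq, sub_self] at hquad
  simp at hquad

end Cell

theorem piecewise_bilinear_posdef_jacobian_injective_on_cells_general
    (m r : ℕ)
    (a : Fin (m + 1) → ℝ) (b : Fin (r + 1) → ℝ)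
    (ha : StrictMono a) (hb : StrictMono b)
    (φ : ℝ × ℝ → ℝ × ℝ)
    (A B C D : Fin m → Fin r → ℝ × ℝ)
    (hbil : ∀ (i : Fin m) (j : Fin r),
      ∀ p ∈ Set.Icc (a i.castSucc) (a i.succ) ×ˢ Set.Icc (b j.castSucc) (b j.succ),
        φ p = ((A i j).1 + (B i j).1 * p.1 + (C i j).1 * p.2 + (D i j).1 * p.1 * p.2,
               (A i j).2 + (B i j).2 * p.1 + (C i j).2 * p.2 + (D i j).2 * p.1 * p.2))
    (hpos : ∀ (i : Fin m) (j : Fin r),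
      ∀ p ∈ interior (Set.Icc (a i.castSucc) (a i.succ) ×ˢ Set.Icc (b j.castSucc) (b j.succ)),
        (bilinearJac (B i j) (C i j) (D i j) p
          + (bilinearJac (B i j) (C i j) (D i j) p)ᵀ).PosDef) :
    ∀ (i : Fin m) (j : Fin r),
      Set.InjOn φ (Set.Icc (a i.castSucc) (a i.succ) ×ˢ Set.Icc (b j.castSucc) (b j.succ)) := by
  intro i j
  have hpos_open : ∀ p ∈ Ioo (a i.castSucc) (a i.succ) ×ˢ Ioo (b j.castSucc) (b j.succ),
      (bilinearJac (B i j) (C i j) (D i j) p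
        + (bilinearJac (B i j) (C i j) (D i j) p)ᵀ).PosDef := by
    simpa only [interior_prod_eq, interior_Icc] using hpos i j
  exact (bilinearMap_injOn (A i j) (ha i.castSucc_lt_succ) (hb j.castSucc_lt_succ) hpos_open).congr
    fun p hp => (hbil i j p hp).symm

/-- A piecewise bilinear map `φ : [0,1]² → ℝ²` on a rectangular grid whose Jacobian has
positive definite symmetric part at every interior point of each cell is (locally)
injective on each grid cell. -/
theorem piecewise_bilinear_posdef_jacobian_injective_on_cells
    (m r : ℕ) (hm : 0 < m) (hr : 0 < r)
    (a : Fin (m + 1) → ℝ) (b : Fin (r + 1) → ℝ)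
    (ha : StrictMono a) (hb : StrictMono b)
    (ha0 : a 0 = 0) (ha1 : a (Fin.last m) = 1) (hb0 : b 0 = 0) (hb1 : b (Fin.last r) = 1)
    (φ : ℝ × ℝ → ℝ × ℝ)
    (hφcont : ContinuousOn φ (Set.Icc (0 : ℝ) 1 ×ˢ Set.Icc (0 : ℝ) 1))
    (A B C D : Fin m → Fin r → ℝ × ℝ)
    (hbil : ∀ (i : Fin m) (j : Fin r),
      ∀ p ∈ Set.Icc (a i.castSucc) (a i.succ) ×ˢ Set.Icc (b j.castSucc) (b j.succ),
        φ p = ((A i j).1 + (B i j).1 * p.1 + (C i j).1 * p.2 + (D i j).1 * p.1 * p.2,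
               (A i j).2 + (B i j).2 * p.1 + (C i j).2 * p.2 + (D i j).2 * p.1 * p.2))
    (hpos : ∀ (i : Fin m) (j : Fin r),
      ∀ p ∈ interior (Set.Icc (a i.castSucc) (a i.succ) ×ˢ Set.Icc (b j.castSucc) (b j.succ)),
        (bilinearJac (B i j) (C i j) (D i j) p
          + (bilinearJac (B i j) (C i j) (D i j) p)ᵀ).PosDef) :
    ∀ (i : Fin m) (j : Fin r),
      Set.InjOn φ (Set.Icc (a i.castSucc) (a i.succ) ×ˢ Set.Icc (b j.castSucc) (b j.succ)) :=
  piecewise_bilinear_posdef_jacobian_injective_on_cells_general m r a b ha hb φ A B C D hbil hpos
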